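/- (Taylor's formula for fields) Let A(y,z) be a field in two variables on M. Then for every positive integer N there exists a unique field R_N(y,z) such that A(y,z) = ∑_{i=0}^{N−1} (∂_y^{(i)}A(y,z))|_{y=z} (y−z)^i + R_N(y,z)(y−z)^N. -/

import Mathlib

/-!
Write `D_i(z) = (∂_y^{(i)} A)(y,z)|_{y=z}`; the `i`-th Taylor term is `T_i = (y - z)^i D_i(z)`.
By the Leibniz rule, `∂_y^{(r+1)}((y - z) X)` restricts on the diagonal to `∂_y^{(r)} X`, while
`(y - z) X` itself restricts to `0`. Hence `(∂_y^{(r)} T_i)|_{y=z} = δ_{ri} D_i`, and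
`B = A - ∑_{i<N} T_i` satisfies `(∂_y^{(r)} B)|_{y=z} = 0` for all `r < N`.

A field whose diagonal restriction vanishes is divisible by `y - z`: expanding `1/(y - z)` in the
domain `|z| < |y|`, the quotient is again a field. Dividing `N` times gives `R_N`, and `R_N` is
unique because `(y - z) X = 0` forces `X = 0` for a field `X`.
-/

open Finset

section VA

variable {k M : Type*} [Field k] [CharZero k] [AddCommGroup M] [Module k M]

/-- Generalized binomial coefficient `C(n,i)` for `n : ℤ`, `i : ℕ`. -/
def ichoose (n : ℤ) (i : ℕ) : ℤ :=
  if 0 ≤ n then (n.toNat.choose i : ℤ)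
  else (-1) ^ i * ((((i : ℤ) - 1 - n).toNat.choose i : ℤ))

/-- `(-1)^m` for an integer `m`. -/
def msign (m : ℤ) : ℤ := if Even m then 1 else -1

/-- A series on `M`, given by its Fourier modes `A_n`. -/
abbrev Ser (M : Type*) : Type _ := ℤ → M → M

/-- `A(z)` is a field: modes applied to any vector vanish for large index. -/
def IsFieldSer (A : Ser M) : Prop := ∀ v : M, ∃ n₀ : ℤ, ∀ n ≥ n₀, A n v = 0

/-- All modes are `k`-linear, i.e. the coefficients are endomorphisms of the
vector space `M`. -/
def IsLinSer (A : Ser M) : Prop := ∀ n : ℤ, IsLinearMap k (A n)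

/-- Residual `m`-th product, in Fourier modes:
`(A_(m)B)_n = ∑_{i≥0} (-1)^i C(m,i) (A_{m-i} B_{n+i} - (-1)^m B_{m+n-i} A_i)`. -/
noncomputable def resProd (A B : Ser M) (m : ℤ) : Ser M := fun n v =>
  ∑ᶠ i : ℕ, ((-1 : ℤ) ^ i * ichoose m i) •
    (A (m - (i : ℤ)) (B (n + (i : ℤ)) v) - msign m • B (m + n - (i : ℤ)) (A (i : ℤ) v))

/-- Mutual locality at order `n`, in Fourier modes:
`∑_{i=0}^n (-1)^i C(n,i) (A_{p+n-i} B_{q+i} - (-1)^n B_{q+n-i} A_{p+i}) = 0`. -/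
def IsLocalAt (A B : Ser M) (n : ℕ) : Prop :=
  ∀ (p q : ℤ) (v : M),
    ∑ i ∈ Finset.range (n + 1), ((-1 : ℤ) ^ i * (n.choose i : ℤ)) •
      (A (p + (n : ℤ) - (i : ℤ)) (B (q + (i : ℤ)) v)
        - (-1 : ℤ) ^ n • B (q + (n : ℤ) - (i : ℤ)) (A (p + (i : ℤ)) v)) = 0

/-- `A` and `B` are mutually local of order exactly `n₀`. -/
def HasOrder (A B : Ser M) (n₀ : ℕ) : Prop :=
  IsLocalAt A B n₀ ∧ ∀ n : ℕ, IsLocalAt A B n → n₀ ≤ n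

/-- The identity field `I(z) = id`. -/
def idSer : Ser M := fun n v => if n = -1 then v else 0

/-- Derivative of a series: `(∂A)_n = -n A_{n-1}`. -/
def dSer (A : Ser M) : Ser M := fun n v => (-n) • A (n - 1) v

/-- Divided-power derivative: `(∂^{(i)}A)_n = (-1)^i C(n,i) A_{n-i}`. -/
def dpowSer (i : ℕ) (A : Ser M) : Ser M := fun n v =>
  ((-1 : ℤ) ^ i * ichoose n i) • A (n - (i : ℤ)) v

/-- Normally ordered product `:A(z)B(z): = A(z)₋B(z) + B(z)A(z)₊`, in modes. -/
noncomputable def noProd (A B : Ser M) : Ser M := fun n v =>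
  (∑ᶠ i : ℕ, A (-(i : ℤ) - 1) (B (n + (i : ℤ)) v)) + ∑ᶠ i : ℕ, B (n - 1 - (i : ℤ)) (A (i : ℤ) v)

/-- A two-variable series is a field if for every vector all modes with either index
large enough kill it. -/
def IsFieldSer2 (A : ℤ → ℤ → M → M) : Prop :=
  ∀ u : M, ∃ p₀ q₀ : ℤ, ∀ p q : ℤ, (p₀ ≤ p ∨ q₀ ≤ q) → A p q u = 0

/-- All modes of a two-variable series are `k`-linear. -/
def IsLinSer2 (A : ℤ → ℤ → M → M) : Prop := ∀ p q : ℤ, IsLinearMap k (A p q)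

/-- Coefficientwise multiplication of a two-variable series by `(y - z)`. -/
def mulYZ (R : ℤ → ℤ → M → M) : ℤ → ℤ → M → M :=
  fun p q u => R (p + 1) q u - R p (q + 1) u

/-- Coefficient of `y^{-p-1}z^{-q-1}` (applied to `u`) of
`(∂_y^{(i)}A)(y,z)|_{y=z} · (y-z)^i`;  here `(∂_y^{(i)}A)|_{y=z}` is the one-variable
field with `z^{-t'-1}`-coefficient `∑_t (-1)^i C(t,i) A_{t-i, t'-1-t}`. -/
noncomputable def taylorTerm (A : ℤ → ℤ → M → M) (i : ℕ) (p q : ℤ) (u : M) : M :=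
  if 0 ≤ p + (i : ℤ) + 1 ∧ p + 1 ≤ 0 then
    ((-1 : ℤ) ^ ((p + (i : ℤ) + 1).toNat) * (i.choose (p + (i : ℤ) + 1).toNat : ℤ)) •
      ∑ᶠ t : ℤ, ((-1 : ℤ) ^ i * ichoose t i) •
        A (t - (i : ℤ)) ((q + ((p + (i : ℤ) + 1).toNat : ℤ)) - 1 - t) u
  else 0

open Function

abbrev Ser2 (M : Type*) : Type _ := ℤ → ℤ → M → M

theorem ichoose_eq_choose (n : ℤ) (i : ℕ) : ichoose n i = Ring.choose n i := by
  rcases le_or_gt 0 n with hn | hn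
  · rw [ichoose, if_pos hn, ← Ring.choose_natCast, Int.toNat_of_nonneg hn]
  · obtain ⟨m, rfl⟩ : ∃ m, n = -m := ⟨-n, (neg_neg n).symm⟩
    rw [ichoose, if_neg (by omega), ← Ring.choose_natCast, Ring.choose_neg,
      Int.toNat_of_nonneg (by omega), Int.negOnePow_def, zpow_natCast, Units.smul_def,
      Units.val_pow_eq_pow_val, Units.val_neg, Units.val_one, smul_eq_mul]
    congr 2
    ring

theorem ichoose_succ_self (n : ℕ) : ichoose n (n + 1) = 0 := by
  rw [ichoose_eq_choose, Ring.choose_natCast, Nat.choose_succ_self, Nat.cast_zero]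

theorem finsum_sub_succ {f : ℕ → M} (hf : HasFiniteSupport f) :
    ∑ᶠ s, (f s - f (s + 1)) = f 0 := by
  obtain ⟨n, hn⟩ := Set.Finite.bddAbove hf
  have hzero : ∀ s, n < s → f s = 0 := fun s hs => by
    by_contra h
    exact absurd (hn h) (not_le.2 hs)
  rw [finsum_eq_sum_of_support_subset (s := Finset.range (n + 1)), Finset.sum_range_sub',
    hzero (n + 1) (by omega), sub_zero]
  intro s hs
  rw [Finset.coe_range, Set.mem_Iio]
  by_contra hsn
  exact hs (by simp only [hzero s (by omega), hzero (s + 1) (by omega), sub_zero])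

theorem finsum_add_one_sub {g : ℤ → M} (hg : HasFiniteSupport g) :
    ∑ᶠ t, (g (t + 1) - g t) = 0 := by
  rw [finsum_sub_distrib (hg.preimage (add_left_injective 1).injOn) hg, sub_eq_zero]
  exact finsum_comp_equiv (Equiv.addRight 1)

theorem finsum_nat_sub {g : ℤ → M} {c : ℤ} (hg : ∀ t, c < t → g t = 0) :
    ∑ᶠ s : ℕ, g (c - s) = ∑ᶠ t, g t := by
  rw [← finsum_mem_range (f := g) (g := fun s : ℕ => c - s) fun a b h => by simpa using h,
    ← finsum_mem_univ g]
  refine finsum_mem_inter_support_eq' g _ _ fun t ht => ?_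
  simp only [Set.mem_range, Set.mem_univ, iff_true]
  exact ⟨(c - t).toNat, by have := not_lt.1 (mt (hg t) ht); omega⟩

def dpowY (i : ℕ) : Ser2 M →+ Ser2 M where
  toFun X p q u := ((-1 : ℤ) ^ i * ichoose p i) • X (p - i) q u
  map_zero' := funext fun _ => funext fun _ => funext fun _ => smul_zero _
  map_add' _ _ := funext fun _ => funext fun _ => funext fun _ => smul_add _ _ _

theorem dpowY_apply (i : ℕ) (X : Ser2 M) (p q : ℤ) (u : M) :
    dpowY i X p q u = ((-1 : ℤ) ^ i * ichoose p i) • X (p - i) q u := rfl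

noncomputable def diagSer2 (X : Ser2 M) : Ser M := fun m u => ∑ᶠ t : ℤ, X t (m - 1 - t) u

/-- `X(y,z)/(y - z)`, expanded in the domain `|z| < |y|`:
`1/(y - z) = ∑_{s ≥ 0} z^s y^{-s-1}`. -/
noncomputable def divYZ (X : Ser2 M) : Ser2 M := fun p q u =>
  ∑ᶠ s : ℕ, X (p - 1 - s) (q + s) u

/-- `D(z)` as a series in `y` and `z`; its `y⁰`-coefficient has index `p = -1`. -/
def constY (D : Ser M) : Ser2 M := fun p q u => if p = -1 then D q u else 0

def fieldSer2 : AddSubgroup (Ser2 M) where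
  carrier := {X | IsFieldSer2 X}
  zero_mem' _ := ⟨0, 0, fun _ _ _ => rfl⟩
  add_mem' {X Y} hX hY u := by
    obtain ⟨p₁, q₁, h₁⟩ := hX u
    obtain ⟨p₂, q₂, h₂⟩ := hY u
    refine ⟨max p₁ p₂, max q₁ q₂, fun p q h => ?_⟩
    simp only [Pi.add_apply, h₁ p q (by omega), h₂ p q (by omega), add_zero]
  neg_mem' {X} hX u := by
    obtain ⟨p₀, q₀, h⟩ := hX u
    exact ⟨p₀, q₀, fun p q hpq => by simp only [Pi.neg_apply, h p q hpq, neg_zero]⟩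

namespace IsFieldSer2

variable {X Y : Ser2 M}

theorem sub (hX : IsFieldSer2 X) (hY : IsFieldSer2 Y) : IsFieldSer2 (X - Y) :=
  fieldSer2.sub_mem hX hY

theorem sum {ι : Type*} {s : Finset ι} {X : ι → Ser2 M} (hX : ∀ i ∈ s, IsFieldSer2 (X i)) :
    IsFieldSer2 (∑ i ∈ s, X i) :=
  show _ ∈ fieldSer2 from sum_mem hX

theorem hasFiniteSupport_diag (hX : IsFieldSer2 X) (c : ℤ) (u : M) :
    HasFiniteSupport fun t : ℤ => X t (c - t) u := by
  obtain ⟨p₀, q₀, h⟩ := hX u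
  refine (Set.finite_Ioo (c - q₀) p₀).subset fun t ht => ?_
  by_contra hmem
  exact ht (h _ _ (by rw [Set.mem_Ioo] at hmem; omega))

theorem hasFiniteSupport_antidiag (hX : IsFieldSer2 X) (a : ℕ → ℤ) (q : ℤ) (u : M) :
    HasFiniteSupport fun s : ℕ => X (a s) (q + s) u := by
  obtain ⟨p₀, q₀, h⟩ := hX u
  refine (Set.finite_Iio (q₀ - q).toNat).subset fun s hs => ?_
  by_contra hmem
  exact hs (h _ _ (by rw [Set.mem_Iio] at hmem; omega))

theorem mulYZ (hX : IsFieldSer2 X) : IsFieldSer2 (mulYZ X) := fun u => by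
  obtain ⟨p₀, q₀, h⟩ := hX u
  refine ⟨p₀, q₀, fun p q hpq => ?_⟩
  rw [_root_.mulYZ, h _ _ (by omega), h _ _ (by omega), sub_zero]

theorem mulYZ_iterate (hX : IsFieldSer2 X) (n : ℕ) : IsFieldSer2 (_root_.mulYZ^[n] X) := by
  induction n with
  | zero => exact hX
  | succ n ih => rw [iterate_succ_apply']; exact ih.mulYZ

theorem dpowY (hX : IsFieldSer2 X) (i : ℕ) : IsFieldSer2 (dpowY i X) := fun u => by
  obtain ⟨p₀, q₀, h⟩ := hX u
  refine ⟨p₀ + i, q₀, fun p q hpq => ?_⟩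
  rw [dpowY_apply, h _ _ (by omega), smul_zero]

theorem diagSer2 (hX : IsFieldSer2 X) : IsFieldSer (diagSer2 X) := fun u => by
  obtain ⟨p₀, q₀, h⟩ := hX u
  exact ⟨p₀ + q₀, fun m hm => finsum_eq_zero_of_forall_eq_zero fun t => h t _ (by omega)⟩

theorem divYZ (hX : IsFieldSer2 X) (hdiag : _root_.diagSer2 X = 0) : IsFieldSer2 (divYZ X) :=
  fun u => by
  obtain ⟨p₀, q₀, h⟩ := hX u
  refine ⟨p₀, q₀, fun p q hpq => ?_⟩
  rcases hpq with hp | hq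
  · -- for `p ≥ p₀` the sum defining `divYZ X p q` is the whole diagonal sum of `X` at `p + q`
    calc _root_.divYZ X p q u = ∑ᶠ s : ℕ, (fun t => X t (p + q - 1 - t) u) (p - 1 - s) :=
          finsum_congr fun s => by
            beta_reduce
            rw [show p + q - 1 - (p - 1 - (s : ℤ)) = q + s by ring]
      _ = _root_.diagSer2 X (p + q) u := finsum_nat_sub fun t ht => h t _ (by omega)
      _ = 0 := by rw [hdiag]; rfl
  · exact finsum_eq_zero_of_forall_eq_zero fun s => h _ _ (by omega)

end IsFieldSer2

theorem IsFieldSer.constY {D : Ser M} (hD : IsFieldSer D) : IsFieldSer2 (constY D) := fun u => by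
  obtain ⟨n₀, h⟩ := hD u
  refine ⟨0, n₀, fun p q hpq => ?_⟩
  rcases hpq with hp | hq
  · rw [_root_.constY, if_neg (by omega)]
  · rw [_root_.constY, h q hq, ite_self]

section Diagonal

variable {X Y : Ser2 M}

theorem diagSer2_add (hX : IsFieldSer2 X) (hY : IsFieldSer2 Y) :
    diagSer2 (X + Y) = diagSer2 X + diagSer2 Y :=
  funext fun m => funext fun u =>
    finsum_add_distrib (hX.hasFiniteSupport_diag (m - 1) u) (hY.hasFiniteSupport_diag (m - 1) u)

theorem diagSer2_sub (hX : IsFieldSer2 X) (hY : IsFieldSer2 Y) :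
    diagSer2 (X - Y) = diagSer2 X - diagSer2 Y :=
  funext fun m => funext fun u =>
    finsum_sub_distrib (hX.hasFiniteSupport_diag (m - 1) u) (hY.hasFiniteSupport_diag (m - 1) u)

theorem diagSer2_sum {ι : Type*} (s : Finset ι) {X : ι → Ser2 M}
    (hX : ∀ i ∈ s, IsFieldSer2 (X i)) :
    diagSer2 (∑ i ∈ s, X i) = ∑ i ∈ s, diagSer2 (X i) := by
  funext m u
  simp only [diagSer2, Finset.sum_apply]
  exact finsum_sum_comm s _ fun i hi => (hX i hi).hasFiniteSupport_diag (m - 1) u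

theorem diagSer2_mulYZ (hX : IsFieldSer2 X) : diagSer2 (mulYZ X) = 0 := by
  funext m u
  calc diagSer2 (mulYZ X) m u = ∑ᶠ t, (X (t + 1) (m - (t + 1)) u - X t (m - t) u) :=
        finsum_congr fun t => by
          rw [mulYZ, show m - 1 - t + 1 = m - t by ring, show m - (t + 1) = m - 1 - t by ring]
    _ = 0 := finsum_add_one_sub (hX.hasFiniteSupport_diag m u)

theorem dpowY_zero (X : Ser2 M) : dpowY 0 X = X := by
  funext p q u
  rw [dpowY_apply, ichoose_eq_choose, Ring.choose_zero_right, pow_zero, one_mul, one_smul,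
    Nat.cast_zero, sub_zero]

theorem dpowY_succ_mulYZ (i : ℕ) (X : Ser2 M) :
    dpowY (i + 1) (mulYZ X) = mulYZ (dpowY (i + 1) X) + dpowY i X := by
  funext p q u
  simp only [dpowY_apply, mulYZ, Pi.add_apply]
  rw [show p - ((i + 1 : ℕ) : ℤ) + 1 = p - i by push_cast; ring,
    show p + 1 - ((i + 1 : ℕ) : ℤ) = p - i by push_cast; ring, ichoose_eq_choose (p + 1),
    Ring.choose_succ_succ, ← ichoose_eq_choose, ← ichoose_eq_choose]
  module

theorem diagSer2_dpowY_succ_mulYZ (hX : IsFieldSer2 X) (i : ℕ) :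
    diagSer2 (dpowY (i + 1) (mulYZ X)) = diagSer2 (dpowY i X) := by
  rw [dpowY_succ_mulYZ, diagSer2_add (hX.dpowY (i + 1)).mulYZ (hX.dpowY i),
    diagSer2_mulYZ (hX.dpowY (i + 1)), zero_add]

theorem diagSer2_dpowY_mulYZ_iterate (hX : IsFieldSer2 X) (n r : ℕ) :
    diagSer2 (dpowY r (mulYZ^[n] X)) = if n ≤ r then diagSer2 (dpowY (r - n) X) else 0 := by
  induction n generalizing r with
  | zero => rw [iterate_zero_apply, if_pos (Nat.zero_le r), Nat.sub_zero]
  | succ n ih =>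
    rw [iterate_succ_apply']
    cases r with
    | zero => rw [dpowY_zero, diagSer2_mulYZ (hX.mulYZ_iterate n), if_neg (by omega)]
    | succ r =>
      rw [diagSer2_dpowY_succ_mulYZ (hX.mulYZ_iterate n), ih, Nat.add_sub_add_right]
      simp only [Nat.add_le_add_iff_right]

theorem dpowY_succ_constY (j : ℕ) (D : Ser M) : dpowY (j + 1) (constY D) = 0 := by
  funext p q u
  rw [dpowY_apply, constY]
  split_ifs with hp
  · obtain rfl : p = j := by omega
    rw [ichoose_succ_self, mul_zero, zero_smul]
    rfl
  · exact smul_zero _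

theorem diagSer2_dpowY_constY (j : ℕ) (D : Ser M) :
    diagSer2 (dpowY j (constY D)) = if j = 0 then D else 0 := by
  cases j with
  | zero =>
    funext m u
    rw [dpowY_zero, if_pos rfl, diagSer2,
      finsum_eq_single _ (-1) fun t ht => by rw [constY, if_neg ht], constY,
      if_pos rfl, sub_neg_eq_add, sub_add_cancel]
  | succ j =>
    funext m u
    rw [dpowY_succ_constY, if_neg (Nat.succ_ne_zero j)]
    exact finsum_eq_zero_of_forall_eq_zero fun _ => rfl

end Diagonal

section Division

variable {X : Ser2 M}

theorem mulYZ_divYZ (hX : IsFieldSer2 X) : mulYZ (divYZ X) = X := by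
  funext p q u
  have hf := hX.hasFiniteSupport_antidiag (fun s => p - s) q u
  calc mulYZ (divYZ X) p q u
      = ∑ᶠ s : ℕ, X (p - s) (q + s) u
          - ∑ᶠ s : ℕ, X (p - (s + 1 : ℕ)) (q + (s + 1 : ℕ)) u := by
        simp only [mulYZ, divYZ]
        congr 1 <;> refine finsum_congr fun s => ?_ <;> congr 1 <;> push_cast <;> ring
    _ = X p q u := by
      rw [← finsum_sub_distrib hf (hf.preimage (add_left_injective 1).injOn), finsum_sub_succ hf,
        Nat.cast_zero, sub_zero, add_zero]

theorem divYZ_mulYZ (hX : IsFieldSer2 X) : divYZ (mulYZ X) = X := by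
  funext p q u
  calc divYZ (mulYZ X) p q u
      = ∑ᶠ s : ℕ, (X (p - s) (q + s) u - X (p - (s + 1 : ℕ)) (q + (s + 1 : ℕ)) u) := by
        refine finsum_congr fun s => ?_
        simp only [mulYZ]
        congr 1 <;> congr 1 <;> push_cast <;> ring
    _ = X p q u := by
      rw [finsum_sub_succ (hX.hasFiniteSupport_antidiag (fun s => p - s) q u), Nat.cast_zero,
        sub_zero, add_zero]

theorem mulYZ_iterate_injOn (n : ℕ) : Set.InjOn (mulYZ^[n]) {X : Ser2 M | IsFieldSer2 X} := by
  induction n with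
  | zero => exact injective_id.injOn
  | succ n ih =>
    intro X hX Y hY h
    rw [iterate_succ_apply, iterate_succ_apply] at h
    rw [← divYZ_mulYZ hX, ← divYZ_mulYZ hY, ih hX.mulYZ hY.mulYZ h]

end Division

theorem mulYZ_iterate_apply (n : ℕ) (X : Ser2 M) (p q : ℤ) (u : M) :
    (mulYZ^[n] X) p q u =
      ∑ ij ∈ antidiagonal n,
        n.choose ij.1 • (-1 : ℤ) ^ ij.2 • X (p + ij.1) (q + ij.2) u := by
  induction n generalizing p q with
  | zero => simp
  | succ n ih =>
    rw [iterate_succ_apply', mulYZ, ih, ih,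
      sum_antidiagonal_choose_succ_nsmul fun i j => (-1 : ℤ) ^ j • X (p + i) (q + j) u,
      sub_eq_neg_add, ← sum_neg_distrib]
    congr 1 <;> refine sum_congr rfl fun ij hij => ?_
    · rw [pow_succ, mul_neg_one, neg_smul, smul_neg, Nat.cast_add_one, add_assoc,
        add_comm 1 (ij.2 : ℤ)]
    · rw [Nat.choose_symm_of_eq_add (HasAntidiagonal.mem_antidiagonal.1 hij).symm,
        Nat.cast_add_one, ← add_assoc, add_right_comm p 1]

theorem taylorTerm_eq_mulYZ_iterate (A : Ser2 M) (i : ℕ) :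
    taylorTerm A i = mulYZ^[i] (constY (diagSer2 (dpowY i A))) := by
  funext p q u
  rw [mulYZ_iterate_apply]
  simp only [constY]
  by_cases h : 0 ≤ p + i + 1 ∧ p + 1 ≤ 0
  · rw [taylorTerm, if_pos h, sum_eq_single_of_mem ((-1 - p).toNat, (p + i + 1).toNat)
      (HasAntidiagonal.mem_antidiagonal.2 (by omega)) fun ij hij hne => ?_]
    · rw [if_pos (by omega),
        ← Nat.choose_symm_of_eq_add (by omega : i = (-1 - p).toNat + (p + i + 1).toNat),
        ← natCast_zsmul, smul_smul, mul_comm]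
      rfl
    · rw [HasAntidiagonal.mem_antidiagonal] at hij
      rw [if_neg fun h' => hne (Prod.ext (by omega) (by omega)), smul_zero, smul_zero]
  · rw [taylorTerm, if_neg h]
    refine (sum_eq_zero fun ij hij => ?_).symm
    rw [HasAntidiagonal.mem_antidiagonal] at hij
    rw [if_neg (by omega), smul_zero, smul_zero]

theorem isLinearMap_finsum {R N P ι : Type*} [Semiring R] [AddCommMonoid N] [AddCommMonoid P]
    [Module R N] [Module R P] {f : ι → N → P} (hf : ∀ i, IsLinearMap R (f i))
    (hfin : ∀ x, HasFiniteSupport fun i => f i x) : IsLinearMap R fun x => ∑ᶠ i, f i x where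
  map_add x y := by
    simp only [(hf _).map_add]
    exact finsum_add_distrib (hfin x) (hfin y)
  map_smul c x := by
    simp only [(hf _).map_smul]
    exact (smul_finsum' c (hfin x)).symm

section Linear

variable (K : Type*) [Field K] [Module K M]

def linSer2 : AddSubgroup (Ser2 M) where
  carrier := {X | IsLinSer2 (k := K) X}
  zero_mem' _ _ := (0 : M →ₗ[K] M).isLinear
  add_mem' hX hY p q := ((hX p q).mk' _ + (hY p q).mk' _).isLinear
  neg_mem' hX p q := (-(hX p q).mk' _).isLinear

variable {K} {X Y : Ser2 M}

theorem IsLinSer2.sub (hX : IsLinSer2 (k := K) X) (hY : IsLinSer2 (k := K) Y) :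
    IsLinSer2 (k := K) (X - Y) :=
  (linSer2 K).sub_mem hX hY

theorem IsLinSer2.sum {ι : Type*} {s : Finset ι} {X : ι → Ser2 M}
    (hX : ∀ i ∈ s, IsLinSer2 (k := K) (X i)) : IsLinSer2 (k := K) (∑ i ∈ s, X i) :=
  show _ ∈ linSer2 K from sum_mem hX

theorem IsLinSer2.mulYZ (hX : IsLinSer2 (k := K) X) : IsLinSer2 (k := K) (mulYZ X) :=
  fun p q => ((hX (p + 1) q).mk' _ - (hX p (q + 1)).mk' _).isLinear

theorem IsLinSer2.mulYZ_iterate (hX : IsLinSer2 (k := K) X) (n : ℕ) :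
    IsLinSer2 (k := K) (_root_.mulYZ^[n] X) := by
  induction n with
  | zero => exact hX
  | succ n ih => rw [iterate_succ_apply']; exact ih.mulYZ

theorem IsLinSer2.dpowY (hX : IsLinSer2 (k := K) X) (i : ℕ) : IsLinSer2 (k := K) (dpowY i X) :=
  fun p q => (((-1 : ℤ) ^ i * ichoose p i) • (hX (p - i) q).mk' _).isLinear

theorem IsLinSer2.diagSer2 (hlX : IsLinSer2 (k := K) X) (hX : IsFieldSer2 X) :
    IsLinSer (k := K) (diagSer2 X) :=
  fun m => isLinearMap_finsum (fun _ => hlX _ _) fun u => hX.hasFiniteSupport_diag (m - 1) u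

theorem IsLinSer2.divYZ (hlX : IsLinSer2 (k := K) X) (hX : IsFieldSer2 X) :
    IsLinSer2 (k := K) (divYZ X) :=
  fun _ q => isLinearMap_finsum (fun _ => hlX _ _) fun u => hX.hasFiniteSupport_antidiag _ q u

theorem IsLinSer.constY {D : Ser M} (hD : IsLinSer (k := K) D) : IsLinSer2 (k := K) (constY D) :=
  fun p q => by
  by_cases hp : p = -1
  · rw [show _root_.constY D p q = D q from funext fun _ => if_pos hp]
    exact hD q
  · rw [show _root_.constY D p q = 0 from funext fun _ => if_neg hp]
    exact (0 : M →ₗ[K] M).isLinear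

theorem exists_mulYZ_iterate_eq (n : ℕ) {B : Ser2 M} (hB : IsFieldSer2 B)
    (hlB : IsLinSer2 (k := K) B) (hdiag : ∀ r < n, diagSer2 (dpowY r B) = 0) :
    ∃ R, (IsFieldSer2 R ∧ IsLinSer2 (k := K) R) ∧ mulYZ^[n] R = B := by
  induction n generalizing B with
  | zero => exact ⟨B, ⟨hB, hlB⟩, rfl⟩
  | succ n ih =>
    have hdiv : IsFieldSer2 (divYZ B) := hB.divYZ (by simpa only [dpowY_zero] using hdiag 0 n.succ_pos)
    obtain ⟨R, hR, hRB⟩ := ih hdiv (hlB.divYZ hB) fun r hr => by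
      rw [← diagSer2_dpowY_succ_mulYZ hdiv, mulYZ_divYZ hB]
      exact hdiag (r + 1) (by omega)
    exact ⟨R, hR, by rw [iterate_succ_apply', hRB, mulYZ_divYZ hB]⟩

end Linear

section Taylor

variable {A : Ser2 M}

theorem IsFieldSer2.taylorTerm (hA : IsFieldSer2 A) (i : ℕ) : IsFieldSer2 (taylorTerm A i) := by
  rw [taylorTerm_eq_mulYZ_iterate]
  exact (hA.dpowY i).diagSer2.constY.mulYZ_iterate i

theorem IsLinSer2.taylorTerm {K : Type*} [Field K] [Module K M] (hlA : IsLinSer2 (k := K) A)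
    (hA : IsFieldSer2 A) (i : ℕ) : IsLinSer2 (k := K) (taylorTerm A i) := by
  rw [taylorTerm_eq_mulYZ_iterate]
  exact ((hlA.dpowY i).diagSer2 (hA.dpowY i)).constY.mulYZ_iterate i

theorem diagSer2_dpowY_taylorTerm (hA : IsFieldSer2 A) (r i : ℕ) :
    diagSer2 (dpowY r (taylorTerm A i)) = if r = i then diagSer2 (dpowY i A) else 0 := by
  rw [taylorTerm_eq_mulYZ_iterate, diagSer2_dpowY_mulYZ_iterate (hA.dpowY i).diagSer2.constY,
    diagSer2_dpowY_constY]
  split_ifs <;> first | rfl | omega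

theorem diagSer2_dpowY_sub_sum_taylorTerm (hA : IsFieldSer2 A) {N r : ℕ} (hr : r < N) :
    diagSer2 (dpowY r (A - ∑ i ∈ range N, taylorTerm A i)) = 0 := by
  have hT : ∀ i ∈ range N, IsFieldSer2 (dpowY r (taylorTerm A i)) :=
    fun i _ => (hA.taylorTerm i).dpowY r
  rw [map_sub, map_sum, diagSer2_sub (hA.dpowY r) (IsFieldSer2.sum hT), diagSer2_sum _ hT]
  simp only [diagSer2_dpowY_taylorTerm hA]
  rw [sum_ite_eq, if_pos (mem_range.2 hr), sub_self]

end Taylor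

theorem stmt12_general (A : ℤ → ℤ → M → M) (hA : IsFieldSer2 A) (hlA : IsLinSer2 (k := k) A)
    (N : ℕ) :
    ∃! R : ℤ → ℤ → M → M, (IsFieldSer2 R ∧ IsLinSer2 (k := k) R) ∧
      ∀ (p q : ℤ) (u : M),
        A p q u = (∑ i ∈ Finset.range N, taylorTerm A i p q u) + (mulYZ^[N] R) p q u := by
  set B := A - ∑ i ∈ range N, taylorTerm A i with hB
  have hBf : IsFieldSer2 B := hA.sub (IsFieldSer2.sum fun i _ => hA.taylorTerm i)
  have hBl : IsLinSer2 (k := k) B := hlA.sub (IsLinSer2.sum fun i _ => hlA.taylorTerm hA i)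
  obtain ⟨R, hR, hRB⟩ := exists_mulYZ_iterate_eq N hBf hBl fun r hr =>
    diagSer2_dpowY_sub_sum_taylorTerm hA hr
  refine ⟨R, ⟨hR, fun p q u => ?_⟩, fun R' ⟨hR', hAR'⟩ => ?_⟩
  · simp only [hRB, hB, Pi.sub_apply, Finset.sum_apply, add_sub_cancel]
  · refine mulYZ_iterate_injOn N hR'.1 hR.1 ?_
    funext p q u
    simp only [hRB, hB, Pi.sub_apply, Finset.sum_apply, hAR' p q u, add_sub_cancel_left]

/-- Taylor's formula for fields in two variables: for every positive integer `N` there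
is a unique field `R_N(y,z)` with
`A(y,z) = ∑_{i<N} (∂_y^{(i)}A)|_{y=z} (y-z)^i + R_N(y,z)(y-z)^N`. -/
theorem stmt12 (A : ℤ → ℤ → M → M) (hA : IsFieldSer2 A) (hlA : IsLinSer2 (k := k) A)
    (N : ℕ) (hN : 1 ≤ N) :
    ∃! R : ℤ → ℤ → M → M, (IsFieldSer2 R ∧ IsLinSer2 (k := k) R) ∧
      ∀ (p q : ℤ) (u : M),
        A p q u = (∑ i ∈ Finset.range N, taylorTerm A i p q u) + (mulYZ^[N] R) p q u :=
  stmt12_general A hA hlA N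

end VA
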